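/- arXiv:1111.4231 — 5 statements merged into one kernel-verified Lean document; each statement's English description precedes it below -/
import Mathlib

section
/- Let K be a complex constant with Re K ≥ 0 and let P₀ ∈ ℂ. Then the initial value problem P'(τ) = -(K/2)|P(τ)|²P(τ), P(0)=P₀, has the explicit solution P(τ) = P₀ · exp(-iΘ(τ)) / sqrt(1 + (Re K)|P₀|²τ), where Θ(τ) = (1/2)(Im K) ∫₀^τ |P₀|²/(1 + (Re K)|P₀|²τ') dτ'. -/
/-!
Write `P = P₀ e^{-iΘ} / s` with `s = √(1 + (Re K)|P₀|²τ)`. Its logarithmic derivative is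
`-iΘ' - s'/s`, and both `Θ'` (fundamental theorem of calculus) and `s'/s` are multiples of
`|P|² = |P₀|²/s²`, namely `(Im K)|P|²/2` and `(Re K)|P|²/2`; so `P'/P = -(K/2)|P|²`.
-/

open Complex

theorem one_add_mul_pos_of_mem_uIcc {a τ x : ℝ} (hτ : 0 < 1 + a * τ) (hx : x ∈ Set.uIcc 0 τ) :
    0 < 1 + a * x := by
  rcases Set.mem_uIcc.mp hx with ⟨h₁, h₂⟩ | ⟨h₁, h₂⟩ <;> rcases le_total 0 a with ha | ha <;>
    nlinarith

theorem hasDerivAt_integral_div_one_add_mul {a τ : ℝ} (c : ℝ) (hτ : 0 < 1 + a * τ) :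
    HasDerivAt (fun t => ∫ x in (0 : ℝ)..t, c / (1 + a * x)) (c / (1 + a * τ)) τ := by
  have hcont : ContinuousOn (fun x : ℝ => c / (1 + a * x)) {x | 0 < 1 + a * x} :=
    continuousOn_const.div (by fun_prop) fun _ hx => hx.ne'
  have hopen : IsOpen {x : ℝ | 0 < 1 + a * x} := isOpen_lt continuous_const (by fun_prop)
  refine intervalIntegral.integral_hasDerivAt_right ?_
    (hcont.stronglyMeasurableAtFilter hopen τ hτ) (hcont.continuousAt (hopen.mem_nhds hτ))
  exact (hcont.mono fun x hx => one_add_mul_pos_of_mem_uIcc hτ hx).intervalIntegrable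

theorem hasDerivAt_mul_cexp_neg_I_div {θ s : ℝ → ℝ} {θ' s' τ : ℝ} (z : ℂ)
    (hθ : HasDerivAt θ θ' τ) (hs : HasDerivAt s s' τ) (hs₀ : s τ ≠ 0) :
    HasDerivAt (fun t => z * exp (-I * θ t) / s t)
      ((-I * θ' - s' / s τ) * (z * exp (-I * θ τ) / s τ)) τ := by
  have hs₀' : (s τ : ℂ) ≠ 0 := ofReal_ne_zero.mpr hs₀
  refine ((((hθ.ofReal_comp.const_mul (-I)).cexp).const_mul z).div hs.ofReal_comp
    hs₀').congr_deriv ?_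
  field_simp

theorem norm_mul_exp_neg_I_div_sqrt_sq (z : ℂ) (θ : ℝ) {f : ℝ} (hf : 0 ≤ f) :
    ‖z * exp (-I * θ) / (Real.sqrt f : ℂ)‖ ^ 2 = ‖z‖ ^ 2 / f := by
  have hphase : ‖exp (-I * θ)‖ = 1 := by simpa using norm_exp_I_mul_ofReal (-θ)
  rw [norm_div, norm_mul, hphase, mul_one, norm_real, Real.norm_eq_abs,
    abs_of_nonneg (Real.sqrt_nonneg f), div_pow, Real.sq_sqrt hf]

/-- explicit solution of the cubic ODE P' = -(K/2)|P|²P. -/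
theorem explicit_solution_cubic_ode
    (K P₀ : ℂ) (hK : 0 ≤ K.re)
    (Θ : ℝ → ℝ) (P : ℝ → ℂ)
    (hΘ : ∀ τ : ℝ, Θ τ =
      (1/2) * K.im * ∫ τ' in (0:ℝ)..τ, ‖P₀‖^2 / (1 + K.re * ‖P₀‖^2 * τ'))
    (hP : ∀ τ : ℝ, P τ =
      P₀ * Complex.exp (-(Complex.I) * (Θ τ : ℂ)) /
        (Real.sqrt (1 + K.re * ‖P₀‖^2 * τ) : ℂ)) :
    P 0 = P₀ ∧
    ∀ τ : ℝ, 0 ≤ τ →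
      HasDerivAt P (-(K/2) * (‖P τ‖^2 : ℝ) * P τ) τ := by
  refine ⟨by simp [hP, hΘ], fun τ hτ => ?_⟩
  set a := K.re * ‖P₀‖ ^ 2
  have hpos : 0 < 1 + a * τ := by
    have := mul_nonneg (mul_nonneg hK (sq_nonneg ‖P₀‖)) hτ
    linarith
  set ρ := ‖P₀‖ ^ 2 / (1 + a * τ)
  have hΘ' : HasDerivAt Θ (1 / 2 * K.im * ρ) τ :=
    ((hasDerivAt_integral_div_one_add_mul _ hpos).const_mul _).congr_of_eventuallyEq
      (.of_forall hΘ)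
  have hsqrt : HasDerivAt (fun t => √(1 + a * t)) (a / (2 * √(1 + a * τ))) τ := by
    simpa using (((hasDerivAt_id τ).const_mul a).const_add 1).sqrt hpos.ne'
  have hρ : ‖P τ‖ ^ 2 = ρ := by
    rw [hP]
    exact norm_mul_exp_neg_I_div_sqrt_sq _ _ hpos.le
  have hsqrt_div : a / (2 * √(1 + a * τ)) / √(1 + a * τ) = 1 / 2 * K.re * ρ := by
    rw [div_div, mul_assoc, Real.mul_self_sqrt hpos.le]
    simp only [ρ, a]
    field_simp
  refine ((hasDerivAt_mul_cexp_neg_I_div P₀ hΘ' hsqrt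
    (Real.sqrt_pos.mpr hpos).ne').congr_of_eventuallyEq (.of_forall hP)).congr_deriv ?_
  rw [← hP, hρ, ← ofReal_div, hsqrt_div]
  conv_rhs => rw [← re_add_im K]
  push_cast
  ring
end

section
/- Let K ∈ ℂ with Re K ≥ 0, and let P solve P'(τ) = -(K/2)|P(τ)|²P(τ) with P(0)=P₀. Then for all τ ≥ 0, |P(τ)| ≤ |P₀| / sqrt(1 + (Re K)|P₀|²τ). In particular |P(τ)| ≤ |P₀| for all τ ≥ 0. -/
/-! Since `⟪P, P'⟫ = -(Re K / 2) ‖P‖⁴`, the quantity `y = ‖P‖²` solves the Riccati equation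
`y' = -(Re K) y²` exactly, so `y τ = y 0 / (1 + Re K · y 0 · τ)`: the bound holds with equality. -/

open Set

theorem eq_zero_of_hasDerivAt_smul_self {E : Type*} [NormedAddCommGroup E] [NormedSpace ℝ E]
    {g : ℝ → E} {c : ℝ → ℝ} (hc : ContinuousOn c (Ici 0))
    (hg : ∀ t, 0 ≤ t → HasDerivAt g (c t • g t) t) (h0 : g 0 = 0) :
    ∀ t, 0 ≤ t → g t = 0 := by
  intro T hT
  obtain ⟨C, hC⟩ := isCompact_Icc.exists_bound_of_continuousOn
    (hc.mono (Icc_subset_Ici_self : Icc 0 T ⊆ Ici 0))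
  refine eq_zero_of_abs_deriv_le_mul_abs_self_of_eq_zero_right (K := C)
    (fun t ht => (hg t ht.1).continuousAt.continuousWithinAt)
    (fun t ht => (hg t ht.1).hasDerivWithinAt) h0 (fun t ht => ?_) T ⟨hT, le_rfl⟩
  rw [norm_smul]
  exact mul_le_mul_of_nonneg_right (hC t (Ico_subset_Icc_self ht)) (norm_nonneg _)

theorem mul_one_add_mul_eq_of_hasDerivAt_neg_mul_sq {a : ℝ} {y : ℝ → ℝ}
    (hy : ∀ t, 0 ≤ t → HasDerivAt y (-a * y t ^ 2) t) :
    ∀ t, 0 ≤ t → y t * (1 + a * y 0 * t) = y 0 := by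
  -- `g = y (1 + a y₀ t) - y₀` solves the linear equation `g' = -a y g` with `g 0 = 0`.
  have hg : ∀ t, 0 ≤ t → HasDerivAt (fun s => y s * (1 + a * y 0 * s) - y 0)
      ((-a * y t) • (y t * (1 + a * y 0 * t) - y 0)) t := by
    intro t ht
    have hlin : HasDerivAt (fun s => 1 + a * y 0 * s) (a * y 0) t := by
      simpa using ((hasDerivAt_id t).const_mul (a * y 0)).const_add 1
    refine (((hy t ht).mul hlin).sub_const (y 0)).congr_deriv ?_
    rw [smul_eq_mul]
    ring
  have hc : ContinuousOn (fun t => -a * y t) (Ici 0) :=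
    continuousOn_const.mul fun t ht => (hy t ht).continuousAt.continuousWithinAt
  intro t ht
  exact sub_eq_zero.mp (eq_zero_of_hasDerivAt_smul_self hc hg (by simp) t ht)

theorem hasDerivAt_norm_sq_of_cubic {P : ℝ → ℂ} {K : ℂ} {τ : ℝ}
    (h : HasDerivAt P (-(K/2) * (‖P τ‖^2 : ℝ) * P τ) τ) :
    HasDerivAt (‖P ·‖ ^ 2) (-K.re * (‖P τ‖ ^ 2) ^ 2) τ := by
  convert h.norm_sq using 1
  rw [Complex.inner, mul_assoc, Complex.mul_conj', ← Complex.ofReal_pow, mul_assoc,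
    ← Complex.ofReal_mul, Complex.re_mul_ofReal, Complex.neg_re, Complex.div_ofNat_re]
  ring

theorem eq_div_sqrt_of_sq_mul_eq {x c d : ℝ} (hx : 0 ≤ x) (hc : 0 ≤ c) (hd : 0 < d)
    (h : x ^ 2 * d = c ^ 2) : x = c / Real.sqrt d := by
  rw [eq_div_iff (Real.sqrt_pos.mpr hd).ne', ← Real.sqrt_sq hx, ← Real.sqrt_mul (sq_nonneg x), h,
    Real.sqrt_sq hc]

/-- decay bound for solutions of P' = -(K/2)|P|²P with Re K ≥ 0. -/
theorem cubic_ode_decay_bound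
    (K P₀ : ℂ) (hK : 0 ≤ K.re) (P : ℝ → ℂ)
    (hode : ∀ τ : ℝ, 0 ≤ τ →
      HasDerivAt P (-(K/2) * (‖P τ‖^2 : ℝ) * P τ) τ)
    (hinit : P 0 = P₀) :
    (∀ τ : ℝ, 0 ≤ τ →
      ‖P τ‖ ≤ ‖P₀‖ / Real.sqrt (1 + K.re * ‖P₀‖^2 * τ)) ∧
    (∀ τ : ℝ, 0 ≤ τ → ‖P τ‖ ≤ ‖P₀‖) := by
  have hrate : ∀ τ, 0 ≤ τ → 1 ≤ 1 + K.re * ‖P₀‖ ^ 2 * τ := fun τ hτ => by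
    have := mul_nonneg (mul_nonneg hK (sq_nonneg ‖P₀‖)) hτ
    linarith
  have hexact : ∀ τ, 0 ≤ τ → ‖P τ‖ = ‖P₀‖ / Real.sqrt (1 + K.re * ‖P₀‖ ^ 2 * τ) := by
    intro τ hτ
    have h := mul_one_add_mul_eq_of_hasDerivAt_neg_mul_sq
      (fun t ht => hasDerivAt_norm_sq_of_cubic (hode t ht)) τ hτ
    rw [hinit] at h
    exact eq_div_sqrt_of_sq_mul_eq (norm_nonneg _) (norm_nonneg _) (by linarith [hrate τ hτ]) h
  refine ⟨fun τ hτ => (hexact τ hτ).le, fun τ hτ => ?_⟩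
  rw [hexact τ hτ]
  exact div_le_self (norm_nonneg _) (Real.one_le_sqrt.mpr (hrate τ hτ))
end

section
/- Let K ∈ ℂ with Re K ≥ 0, E₀ > 0, ε > 0, σ ∈ ℝ, ρ > 1, κ ≥ 0, c₀ > 0, and t₀ ≥ 1 with c₀⁻¹⟨σ⟩ < t₀ < c₀⟨σ⟩, where ⟨σ⟩ = sqrt(1+σ²). Suppose |z₀| ≤ E₀ε⟨σ⟩^{-κ-ρ+1} and |J(t)| ≤ E₀ε⟨σ⟩^{-κ}t^{-ρ} for t ≥ t₀. Then the unique global C¹ solution z of z'(t) = -(K/(2t))|z(t)|²z(t) + J(t), z(t₀) = z₀, satisfies |z(t)| ≤ C₀ ε ⟨σ⟩^{-κ-ρ+1} for all t ≥ t₀, where C₀ = E₀(1 + c₀^{ρ-1}/(ρ-1)). -/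
/-!
Since `Re K ≥ 0` the cubic term is dissipative, `⟪z, -(K/2t)|z|²z⟫ ≤ 0`, so `|z|` grows at most
at the rate `|J(t)| ≤ c t^(-ρ)` and `|z(t)| ≤ |z₀| + c t₀^(1-ρ)/(ρ-1)`; for `c = E₀ε⟨σ⟩^(-κ)` and
`t₀ > c₀⁻¹⟨σ⟩` this is at most `C₀ε⟨σ⟩^(-κ-ρ+1)`. For existence, the cubic term is replaced by
a bounded, globally Lipschitz truncation that agrees with it on a ball beyond this a priori bound.
Picard–Lindelöf on the intervals `[t₀, t₀ + n]` and uniqueness give a global solution of the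
truncated equation; by the same estimate it never leaves the ball, so it solves the original one.
-/

open Set Filter Topology NNReal

noncomputable section Truncation

variable {E : Type*} [NormedAddCommGroup E] [NormedSpace ℝ E] {M : ℝ}

def radialRetraction (M : ℝ) (x : E) : E := (M / max ‖x‖ M) • x

lemma radialRetraction_of_norm_le {x : E} (hx : ‖x‖ ≤ M) : radialRetraction M x = x := by
  rcases (norm_nonneg x).trans hx |>.eq_or_lt with rfl | hM
  · simp [radialRetraction, norm_le_zero_iff.mp hx]
  · rw [radialRetraction, max_eq_right hx, div_self hM.ne', one_smul]

lemma norm_radialRetraction_le (hM : 0 < M) (x : E) : ‖radialRetraction M x‖ ≤ M := by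
  have hmax : 0 < max ‖x‖ M := lt_max_of_lt_right hM
  rw [radialRetraction, norm_smul, Real.norm_of_nonneg (by positivity), div_mul_eq_mul_div,
    div_le_iff₀ hmax]
  exact mul_le_mul_of_nonneg_left (le_max_left _ _) hM.le

lemma lipschitzWith_radialRetraction (hM : 0 < M) :
    LipschitzWith 2 (radialRetraction (E := E) M) := by
  refine LipschitzWith.of_dist_le_mul fun x y => ?_
  set rx := max ‖x‖ M
  set ry := max ‖y‖ M
  have hrx : M ≤ rx := le_max_right _ _
  have hry : ‖y‖ ≤ ry := le_max_left _ _
  have hrx0 : 0 < rx := hM.trans_le hrx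
  have hry0 : 0 < ry := hM.trans_le (le_max_right _ _)
  have hr : |ry - rx| ≤ ‖x - y‖ := by
    rw [abs_sub_comm]
    exact (abs_max_sub_max_le_abs _ _ _).trans (abs_norm_sub_norm_le x y)
  have hsplit : radialRetraction M x - radialRetraction M y
      = (M / rx) • (x - y) + (M / rx - M / ry) • y := by
    simp only [radialRetraction, rx, ry, smul_sub, sub_smul]; abel
  have h₁ : ‖(M / rx) • (x - y)‖ ≤ ‖x - y‖ := by
    rw [norm_smul, Real.norm_of_nonneg (by positivity)]
    exact mul_le_of_le_one_left (norm_nonneg _) ((div_le_one hrx0).mpr hrx)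
  have h₂ : ‖(M / rx - M / ry) • y‖ ≤ ‖x - y‖ := by
    rw [norm_smul, Real.norm_eq_abs, div_sub_div _ _ hrx0.ne' hry0.ne', abs_div,
      abs_of_pos (mul_pos hrx0 hry0), show M * ry - rx * M = M * (ry - rx) by ring, abs_mul,
      abs_of_pos hM]
    calc M * |ry - rx| / (rx * ry) * ‖y‖
        = (M / rx) * (‖y‖ / ry) * |ry - rx| := by field_simp
      _ ≤ 1 * 1 * ‖x - y‖ := by
        gcongr
        · exact (div_le_one hrx0).mpr hrx
        · exact (div_le_one hry0).mpr hry
      _ = ‖x - y‖ := by ring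
  rw [dist_eq_norm, dist_eq_norm, hsplit, NNReal.coe_ofNat]
  linarith [norm_add_le ((M / rx) • (x - y)) ((M / rx - M / ry) • y)]

lemma norm_sq_smul_sub_norm_sq_smul_le {x y : E} (hx : ‖x‖ ≤ M) (hy : ‖y‖ ≤ M) :
    ‖‖x‖ ^ 2 • x - ‖y‖ ^ 2 • y‖ ≤ 3 * M ^ 2 * ‖x - y‖ := by
  have hsplit : ‖x‖ ^ 2 • x - ‖y‖ ^ 2 • y
      = ‖x‖ ^ 2 • (x - y) + ((‖x‖ - ‖y‖) * (‖x‖ + ‖y‖)) • y := by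
    module
  have hdiff : |‖x‖ - ‖y‖| ≤ ‖x - y‖ := abs_norm_sub_norm_le x y
  calc ‖‖x‖ ^ 2 • x - ‖y‖ ^ 2 • y‖
      ≤ ‖x‖ ^ 2 * ‖x - y‖ + |‖x‖ - ‖y‖| * (‖x‖ + ‖y‖) * ‖y‖ := by
        rw [hsplit]
        refine (norm_add_le _ _).trans_eq ?_
        rw [norm_smul, norm_smul, Real.norm_of_nonneg (by positivity), Real.norm_eq_abs,
          abs_mul, abs_of_nonneg (by positivity : 0 ≤ ‖x‖ + ‖y‖)]
    _ ≤ M ^ 2 * ‖x - y‖ + ‖x - y‖ * (M + M) * M := by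
        have := (norm_nonneg y).trans hy
        gcongr
    _ = 3 * M ^ 2 * ‖x - y‖ := by ring

def truncatedCube (M : ℝ) (x : E) : E := ‖radialRetraction M x‖ ^ 2 • radialRetraction M x

lemma truncatedCube_of_norm_le {x : E} (hx : ‖x‖ ≤ M) : truncatedCube M x = ‖x‖ ^ 2 • x := by
  rw [truncatedCube, radialRetraction_of_norm_le hx]

lemma truncatedCube_eq_smul (x : E) :
    truncatedCube M x = (‖radialRetraction M x‖ ^ 2 * (M / max ‖x‖ M)) • x := by
  rw [truncatedCube, radialRetraction, mul_smul]

lemma norm_truncatedCube_le (hM : 0 < M) (x : E) : ‖truncatedCube M x‖ ≤ M ^ 3 := by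
  rw [truncatedCube, norm_smul, norm_pow, norm_norm, ← pow_succ]
  exact pow_le_pow_left₀ (norm_nonneg _) (norm_radialRetraction_le hM x) 3

lemma lipschitzWith_truncatedCube (hM : 0 < M) :
    LipschitzWith (6 * M.toNNReal ^ 2) (truncatedCube (E := E) M) := by
  refine LipschitzWith.of_dist_le_mul fun x y => ?_
  have hp := lipschitzWith_radialRetraction (E := E) hM
  calc dist (truncatedCube M x) (truncatedCube M y)
      ≤ 3 * M ^ 2 * dist (radialRetraction M x) (radialRetraction M y) := by
        rw [dist_eq_norm, dist_eq_norm]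
        exact norm_sq_smul_sub_norm_sq_smul_le (norm_radialRetraction_le hM x)
          (norm_radialRetraction_le hM y)
    _ ≤ 3 * M ^ 2 * (2 * dist x y) := by gcongr; exact_mod_cast hp.dist_le_mul x y
    _ = (6 * M.toNNReal ^ 2 : NNReal) * dist x y := by
        push_cast [Real.coe_toNNReal _ hM.le]; ring

end Truncation

lemma norm_le_add_sub_of_inner_deriv_le {E : Type*} [NormedAddCommGroup E]
    [InnerProductSpace ℝ E] {f f' : ℝ → E} {G g : ℝ → ℝ} {a b : ℝ} (hab : a ≤ b)
    (hf : ContinuousOn f (Icc a b)) (hf' : ∀ t ∈ Ioo a b, HasDerivAt f (f' t) t)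
    (hG : ContinuousOn G (Icc a b)) (hG' : ∀ t ∈ Ioo a b, HasDerivAt G (g t) t)
    (hg : ∀ t ∈ Ioo a b, 0 ≤ g t)
    (hfg : ∀ t ∈ Ioo a b, inner ℝ (f t) (f' t) ≤ ‖f t‖ * g t) :
    ‖f b‖ ≤ ‖f a‖ + (G b - G a) := by
  -- `‖f‖` need not be differentiable where `f` vanishes, so work with `√(‖f‖² + δ²)`
  refine le_of_forall_pos_le_add fun δ hδ => ?_
  set φ : ℝ → ℝ := fun t => √(‖f t‖ ^ 2 + δ ^ 2)
  have hφ_pos : ∀ t, 0 < φ t := fun t => Real.sqrt_pos.mpr (by positivity)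
  have hφ' : ∀ t ∈ Ioo a b, HasDerivAt φ (inner ℝ (f t) (f' t) / φ t) t := by
    intro t ht
    convert ((hf' t ht).norm_sq.add_const (δ ^ 2)).sqrt (by positivity) using 1
    have := hφ_pos t
    dsimp only [φ] at this ⊢
    field_simp
  have hanti : AntitoneOn (fun t => φ t - G t) (Icc a b) := by
    refine antitoneOn_of_hasDerivWithinAt_nonpos
      (f' := fun t => inner ℝ (f t) (f' t) / φ t - g t) (convex_Icc a b)
      ((Real.continuous_sqrt.comp_continuousOn
        ((hf.norm.pow 2).add continuousOn_const)).sub hG)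
      (fun t ht => ?_) (fun t ht => ?_)
    · rw [interior_Icc] at ht ⊢
      exact ((hφ' t ht).sub (hG' t ht)).hasDerivWithinAt
    · rw [interior_Icc] at ht
      have hnorm : ‖f t‖ ≤ φ t := Real.le_sqrt_of_sq_le (by linarith [sq_nonneg δ])
      rw [sub_nonpos, div_le_iff₀ (hφ_pos t)]
      exact (hfg t ht).trans (by nlinarith [hg t ht])
  have hab' := hanti (left_mem_Icc.mpr hab) (right_mem_Icc.mpr hab) hab
  have hφb : ‖f b‖ ≤ φ b := Real.le_sqrt_of_sq_le (by linarith [sq_nonneg δ])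
  have hφa : φ a ≤ ‖f a‖ + δ :=
    Real.sqrt_le_iff.mpr ⟨by positivity, by nlinarith [norm_nonneg (f a)]⟩
  simp only at hab'
  linarith

section GlobalExistence

variable {E : Type*} [NormedAddCommGroup E] [NormedSpace ℝ E]
  {v : ℝ → E → E} {L : ℝ≥0} {C t₀ : ℝ}

lemma exists_hasDerivWithinAt_Icc_of_lipschitzWith_of_norm_le [CompleteSpace E]
    (hlip : ∀ t ≥ t₀, LipschitzWith L (v t)) (hcont : ∀ x, ContinuousOn (v · x) (Ici t₀))
    (hbound : ∀ t ≥ t₀, ∀ x, ‖v t x‖ ≤ C) (x₀ : E) {T : ℝ} (hT : t₀ ≤ T) :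
    ∃ f : ℝ → E, f t₀ = x₀ ∧
      ∀ t ∈ Icc t₀ T, HasDerivWithinAt f (v t (f t)) (Icc t₀ T) t := by
  have hC : 0 ≤ C := (norm_nonneg _).trans (hbound t₀ le_rfl x₀)
  -- a bounded field cannot leave the ball of radius `C * (T - t₀)` in time `T - t₀`
  have hPL : IsPicardLindelof v ⟨t₀, left_mem_Icc.mpr hT⟩ x₀ (C * (T - t₀)).toNNReal 0
      C.toNNReal L :=
    { lipschitzOnWith := fun t ht => (hlip t ht.1).lipschitzOnWith
      continuousOn := fun x _ => (hcont x).mono Icc_subset_Ici_self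
      norm_le := fun t ht x _ => (hbound t ht.1 x).trans (Real.le_coe_toNNReal C)
      mul_max_le := by
        rw [sub_self, max_eq_left (sub_nonneg.mpr hT), NNReal.coe_zero, sub_zero,
          Real.coe_toNNReal _ hC, Real.coe_toNNReal _ (mul_nonneg hC (sub_nonneg.mpr hT))] }
  exact hPL.exists_eq_forall_mem_Icc_hasDerivWithinAt₀

lemma eqOn_Icc_of_hasDerivWithinAt (hlip : ∀ t ≥ t₀, LipschitzWith L (v t)) {f g : ℝ → E}
    {T : ℝ} (hf : ∀ t ∈ Icc t₀ T, HasDerivWithinAt f (v t (f t)) (Icc t₀ T) t)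
    (hg : ∀ t ∈ Icc t₀ T, HasDerivWithinAt g (v t (g t)) (Icc t₀ T) t) (h₀ : f t₀ = g t₀) :
    EqOn f g (Icc t₀ T) := by
  have hright : ∀ {u : ℝ → E}, (∀ t ∈ Icc t₀ T, HasDerivWithinAt u (v t (u t)) (Icc t₀ T) t) →
      ∀ t ∈ Ico t₀ T, HasDerivWithinAt u (v t (u t)) (Ici t) t := fun hu t ht =>
    (hu t (Ico_subset_Icc_self ht)).mono_of_mem_nhdsWithin (Icc_mem_nhdsGE_of_mem ht)
  refine ODE_solution_unique_of_mem_Icc_right (s := fun _ => univ)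
    (fun t ht => (hlip t ht.1).lipschitzOnWith) (fun t ht => (hf t ht).continuousWithinAt)
    (hright hf) (fun _ _ => mem_univ _) (fun t ht => (hg t ht).continuousWithinAt)
    (hright hg) (fun _ _ => mem_univ _) h₀

lemma exists_forall_hasDerivAt_of_lipschitzWith_of_norm_le [CompleteSpace E]
    (hlip : ∀ t ≥ t₀, LipschitzWith L (v t)) (hcont : ∀ x, ContinuousOn (v · x) (Ici t₀))
    (hbound : ∀ t ≥ t₀, ∀ x, ‖v t x‖ ≤ C) (x₀ : E) :
    ∃ z : ℝ → E, z t₀ = x₀ ∧ ContinuousOn z (Ici t₀) ∧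
      ∀ t, t₀ < t → HasDerivAt z (v t (z t)) t := by
  have hT : ∀ n : ℕ, t₀ ≤ t₀ + n := fun n => le_add_of_nonneg_right n.cast_nonneg
  choose F hF₀ hF using fun n : ℕ =>
    exists_hasDerivWithinAt_Icc_of_lipschitzWith_of_norm_le hlip hcont hbound x₀ (hT n)
  have hFF : ∀ m n : ℕ, m ≤ n → EqOn (F m) (F n) (Icc t₀ (t₀ + m)) := fun m n hmn =>
    eqOn_Icc_of_hasDerivWithinAt hlip (hF m) (fun t ht => (hF n t
      (Icc_subset_Icc_right (by gcongr) ht)).mono (Icc_subset_Icc_right (by gcongr)))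
      ((hF₀ m).trans (hF₀ n).symm)
  set z : ℝ → E := fun t => F ⌈t - t₀⌉₊ t
  have hzF : ∀ n : ℕ, EqOn z (F n) (Icc t₀ (t₀ + n)) := by
    intro n t ht
    have hceil : t ∈ Icc t₀ (t₀ + ⌈t - t₀⌉₊) := ⟨ht.1, by linarith [Nat.le_ceil (t - t₀)]⟩
    rcases le_total ⌈t - t₀⌉₊ n with h | h
    · exact hFF _ n h hceil
    · exact (hFF n _ h ht).symm
  have hnhds : ∀ t, ∃ n : ℕ, t < t₀ + n := fun t =>
    (exists_nat_gt (t - t₀)).imp fun n hn => by linarith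
  refine ⟨z, (hzF 0 ⟨le_rfl, by simp⟩).trans (hF₀ 0), fun t ht => ?_, fun t ht => ?_⟩
  · obtain ⟨n, hn⟩ := hnhds t
    have hmem : Icc t₀ (t₀ + n) ∈ 𝓝[Ici t₀] t := by
      rw [← Ici_inter_Iic]
      exact inter_mem self_mem_nhdsWithin (mem_nhdsWithin_of_mem_nhds (Iic_mem_nhds hn))
    exact ((hF n t ⟨ht, hn.le⟩).continuousWithinAt.mono_of_mem_nhdsWithin hmem)
      |>.congr_of_eventuallyEq (eventuallyEq_of_mem hmem (hzF n)) (hzF n ⟨ht, hn.le⟩)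
  · obtain ⟨n, hn⟩ := hnhds t
    have hmem : Icc t₀ (t₀ + n) ∈ 𝓝 t := Icc_mem_nhds ht hn
    rw [hzF n ⟨ht.le, hn.le⟩]
    exact ((hF n t ⟨ht.le, hn.le⟩).hasDerivAt hmem).congr_of_eventuallyEq
      (eventuallyEq_of_mem hmem (hzF n))

end GlobalExistence

noncomputable section CubicField

open Complex ComplexConjugate

def truncatedCubicField (K : ℂ) (M : ℝ) (J : ℝ → ℂ) (t : ℝ) (x : ℂ) : ℂ :=
  -(K / (2 * t)) * truncatedCube M x + J t

variable {K : ℂ} {M : ℝ} {J : ℝ → ℂ}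

lemma norm_div_two_mul_le_of_le {t₀ t : ℝ} (ht₀ : 0 < t₀) (ht : t₀ ≤ t) :
    ‖K / (2 * t)‖ ≤ ‖K / (2 * t₀)‖ := by
  rw [norm_div, norm_div, norm_mul, norm_mul, norm_real, norm_real, Real.norm_of_nonneg ht₀.le,
    Real.norm_of_nonneg (ht₀.le.trans ht)]
  gcongr
  norm_num [ht₀]

lemma lipschitzWith_truncatedCubicField {t₀ t : ℝ} (ht₀ : 0 < t₀) (ht : t₀ ≤ t) (hM : 0 < M) :
    LipschitzWith (‖K / (2 * t₀)‖₊ * (6 * M.toNNReal ^ 2)) (truncatedCubicField K M J t) := by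
  have hcoef : ‖-(K / (2 * t))‖₊ ≤ ‖K / (2 * t₀)‖₊ := by
    rw [← NNReal.coe_le_coe, coe_nnnorm, coe_nnnorm, norm_neg]
    exact norm_div_two_mul_le_of_le ht₀ ht
  have h := (lipschitzWith_smul (-(K / (2 * t)))).comp (lipschitzWith_truncatedCube (E := ℂ) hM)
  refine (LipschitzWith.of_dist_le_mul fun x y => ?_).weaken (mul_le_mul_left hcoef _)
  simpa [truncatedCubicField, dist_add_right] using h.dist_le_mul x y

lemma norm_truncatedCubicField_le {t₀ t : ℝ} (ht₀ : 0 < t₀) (ht : t₀ ≤ t) (hM : 0 < M) (x : ℂ) :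
    ‖truncatedCubicField K M J t x‖ ≤ ‖K / (2 * t₀)‖ * M ^ 3 + ‖J t‖ := by
  refine (norm_add_le _ _).trans (add_le_add_left ?_ _)
  rw [norm_mul, norm_neg]
  exact mul_le_mul (norm_div_two_mul_le_of_le ht₀ ht) (norm_truncatedCube_le hM x)
    (norm_nonneg _) (norm_nonneg _)

lemma real_inner_truncatedCubicField_le (hK : 0 ≤ K.re) (hM : 0 ≤ M) {t : ℝ} (ht : 0 < t)
    (x : ℂ) : inner ℝ x (truncatedCubicField K M J t x) ≤ ‖x‖ * ‖J t‖ := by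
  have hcube : inner ℝ x (-(K / (2 * t)) * truncatedCube M x) ≤ 0 := by
    have hc : 0 ≤ ‖radialRetraction M x‖ ^ 2 * (M / max ‖x‖ M) :=
      mul_nonneg (sq_nonneg _) (div_nonneg hM (le_max_of_le_right hM))
    rw [truncatedCube_eq_smul, Complex.inner, real_smul]
    generalize ‖radialRetraction M x‖ ^ 2 * (M / max ‖x‖ M) = c at hc ⊢
    have hre : -(K / (2 * t)) * (c * x) * conj x = ((-(c * normSq x / (2 * t)) : ℝ) : ℂ) * K := by
      push_cast
      linear_combination (-(K / (2 * t)) * c) * mul_conj x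
    rw [hre, re_ofReal_mul, neg_mul, neg_nonpos]
    exact mul_nonneg (div_nonneg (mul_nonneg hc (normSq_nonneg x)) (by linarith)) hK
  rw [truncatedCubicField, inner_add_right]
  linarith [real_inner_le_norm x (J t)]

variable {t₀ c ρ : ℝ}

lemma exists_forall_hasDerivAt_truncatedCubicField (ht₀ : 0 < t₀) (hM : 0 < M)
    (hJcont : ContinuousOn J (Ici t₀)) {C : ℝ} (hJ : ∀ t ≥ t₀, ‖J t‖ ≤ C) (z₀ : ℂ) :
    ∃ z : ℝ → ℂ, z t₀ = z₀ ∧ ContinuousOn z (Ici t₀) ∧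
      ∀ t, t₀ < t → HasDerivAt z (truncatedCubicField K M J t (z t)) t := by
  have hcont : ∀ x, ContinuousOn (truncatedCubicField K M J · x) (Ici t₀) := fun x =>
    ((continuousOn_const.div (continuousOn_const.mul continuous_ofReal.continuousOn)
      fun t ht => mul_ne_zero two_ne_zero (ofReal_ne_zero.mpr (ht₀.trans_le ht).ne')).neg.mul
      continuousOn_const).add hJcont
  exact exists_forall_hasDerivAt_of_lipschitzWith_of_norm_le
    (fun t ht => lipschitzWith_truncatedCubicField ht₀ ht hM) hcont
    (fun t ht x => (norm_truncatedCubicField_le ht₀ ht hM x).trans (add_le_add_right (hJ t ht) _))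
    z₀

lemma norm_le_of_hasDerivAt_truncatedCubicField (hK : 0 ≤ K.re) (hM : 0 ≤ M) (ht₀ : 0 < t₀)
    (hρ : 1 < ρ) (hJ : ∀ t ≥ t₀, ‖J t‖ ≤ c * t ^ (-ρ)) {z : ℝ → ℂ}
    (hzc : ContinuousOn z (Ici t₀))
    (hz : ∀ t, t₀ < t → HasDerivAt z (truncatedCubicField K M J t (z t)) t) {T : ℝ}
    (hT : t₀ ≤ T) : ‖z T‖ ≤ ‖z t₀‖ + c * t₀ ^ (1 - ρ) / (ρ - 1) := by
  have hc : 0 ≤ c := nonneg_of_mul_nonneg_left ((norm_nonneg _).trans (hJ t₀ le_rfl))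
    (Real.rpow_pos_of_pos ht₀ _)
  set G : ℝ → ℝ := fun t => -(c * t ^ (1 - ρ) / (ρ - 1))
  have hG' : ∀ t, 0 < t → HasDerivAt G (c * t ^ (-ρ)) t := by
    intro t ht
    refine (((Real.hasDerivAt_rpow_const (p := 1 - ρ) (Or.inl ht.ne')).const_mul c).div_const
      (ρ - 1)).neg.congr_deriv ?_
    rw [sub_sub_cancel_left]
    field_simp [(sub_pos.mpr hρ).ne']
    ring
  have key := norm_le_add_sub_of_inner_deriv_le hT (hzc.mono Icc_subset_Ici_self)
    (fun t ht => hz t ht.1)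
    (fun t ht => (hG' t (ht₀.trans_le ht.1)).continuousAt.continuousWithinAt)
    (fun t ht => hG' t (ht₀.trans ht.1))
    (fun t ht => (norm_nonneg _).trans (hJ t ht.1.le))
    (fun t ht => (real_inner_truncatedCubicField_le hK hM (ht₀.trans ht.1) (z t)).trans
      (mul_le_mul_of_nonneg_left (hJ t ht.1.le) (norm_nonneg _)))
  have hTpos : 0 ≤ c * T ^ (1 - ρ) / (ρ - 1) :=
    div_nonneg (mul_nonneg hc (Real.rpow_nonneg (ht₀.le.trans hT) _)) (by linarith)
  linarith

theorem exists_solution_cubic_ode_norm_le (hK : 0 ≤ K.re) (ht₀ : 0 < t₀) (hρ : 1 < ρ)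
    (hJcont : ContinuousOn J (Ici t₀)) (hJ : ∀ t ≥ t₀, ‖J t‖ ≤ c * t ^ (-ρ)) (z₀ : ℂ) :
    ∃ z : ℝ → ℂ, z t₀ = z₀ ∧ ContinuousOn z (Ici t₀) ∧
      (∀ t : ℝ, t₀ < t → HasDerivAt z (-(K / (2 * t)) * (‖z t‖ ^ 2 : ℝ) * z t + J t) t) ∧
      ∀ t : ℝ, t₀ ≤ t → ‖z t‖ ≤ ‖z₀‖ + c * t₀ ^ (1 - ρ) / (ρ - 1) := by
  set B := ‖z₀‖ + c * t₀ ^ (1 - ρ) / (ρ - 1)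
  have hc : 0 ≤ c := nonneg_of_mul_nonneg_left ((norm_nonneg _).trans (hJ t₀ le_rfl))
    (Real.rpow_pos_of_pos ht₀ _)
  have hB : 0 ≤ B := add_nonneg (norm_nonneg _)
    (div_nonneg (mul_nonneg hc (Real.rpow_nonneg ht₀.le _)) (by linarith))
  -- the truncation at `B + 1` is inactive along a solution obeying the a priori bound `B`
  obtain ⟨z, hz₀, hzc, hz⟩ := exists_forall_hasDerivAt_truncatedCubicField (K := K) (M := B + 1)
    ht₀ (by linarith) hJcont (fun t ht => (hJ t ht).trans
      (mul_le_mul_of_nonneg_left (Real.rpow_le_rpow_of_nonpos ht₀ ht (by linarith)) hc)) z₀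
  have hbound : ∀ t, t₀ ≤ t → ‖z t‖ ≤ B := fun t ht => by
    simpa only [hz₀] using
      norm_le_of_hasDerivAt_truncatedCubicField hK (by linarith) ht₀ hρ hJ hzc hz ht
  refine ⟨z, hz₀, hzc, fun t ht => ?_, hbound⟩
  convert hz t ht using 1
  rw [truncatedCubicField, truncatedCube_of_norm_le ((hbound t ht.le).trans (by linarith)),
    real_smul, mul_assoc]

end CubicField

lemma rpow_one_sub_le_of_inv_mul_le {c s t ρ : ℝ} (hc : 0 < c) (hs : 0 < s) (hρ : 1 ≤ ρ)
    (h : c⁻¹ * s ≤ t) : t ^ (1 - ρ) ≤ c ^ (ρ - 1) * s ^ (1 - ρ) := by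
  calc t ^ (1 - ρ) ≤ (c⁻¹ * s) ^ (1 - ρ) :=
        Real.rpow_le_rpow_of_nonpos (by positivity) h (by linarith)
    _ = c ^ (ρ - 1) * s ^ (1 - ρ) := by
        rw [Real.mul_rpow (by positivity) hs.le, Real.inv_rpow hc.le, ← Real.rpow_neg hc.le,
          neg_sub]

theorem perturbed_cubic_ode_global_bound_general
    (K z₀ : ℂ) (E₀ ε σ ρ κ c₀ t₀ : ℝ)
    (hK : 0 ≤ K.re) (hE₀ : 0 < E₀) (hε : 0 < ε) (hρ : 1 < ρ)
    (hc₀ : 0 < c₀) (ht₀ : 1 ≤ t₀)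
    (ht₀l : c₀⁻¹ * Real.sqrt (1 + σ^2) < t₀)
    (J : ℝ → ℂ) (hJcont : ContinuousOn J (Set.Ici t₀))
    (hz₀ : ‖z₀‖ ≤ E₀ * ε * (Real.sqrt (1 + σ^2)) ^ (-κ - ρ + 1))
    (hJ : ∀ t : ℝ, t₀ ≤ t →
      ‖J t‖ ≤ E₀ * ε * (Real.sqrt (1 + σ^2)) ^ (-κ) * t ^ (-ρ)) :
    ∃ z : ℝ → ℂ,
      z t₀ = z₀ ∧
      ContinuousOn z (Set.Ici t₀) ∧
      (∀ t : ℝ, t₀ < t →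
        HasDerivAt z (-(K/(2*t)) * (‖z t‖^2 : ℝ) * z t + J t) t) ∧
      (∀ t : ℝ, t₀ ≤ t →
        ‖z t‖ ≤ (E₀ * (1 + c₀ ^ (ρ - 1) / (ρ - 1))) * ε *
          (Real.sqrt (1 + σ^2)) ^ (-κ - ρ + 1)) := by
  set s := √(1 + σ ^ 2)
  have hs : 0 < s := Real.sqrt_pos.mpr (by positivity)
  obtain ⟨z, hz₀', hzc, hz, hbound⟩ :=
    exists_solution_cubic_ode_norm_le hK (by linarith) hρ hJcont hJ z₀
  refine ⟨z, hz₀', hzc, hz, fun t ht => (hbound t ht).trans ?_⟩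
  have hdecay : s ^ (-κ) * t₀ ^ (1 - ρ) ≤ c₀ ^ (ρ - 1) * s ^ (-κ - ρ + 1) := by
    calc s ^ (-κ) * t₀ ^ (1 - ρ) ≤ s ^ (-κ) * (c₀ ^ (ρ - 1) * s ^ (1 - ρ)) := by
          gcongr; exact rpow_one_sub_le_of_inv_mul_le hc₀ hs hρ.le ht₀l.le
      _ = c₀ ^ (ρ - 1) * s ^ (-κ - ρ + 1) := by
          rw [mul_left_comm, ← Real.rpow_add hs]; ring_nf
  calc ‖z₀‖ + E₀ * ε * s ^ (-κ) * t₀ ^ (1 - ρ) / (ρ - 1)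
      ≤ E₀ * ε * s ^ (-κ - ρ + 1) + E₀ * ε * (c₀ ^ (ρ - 1) * s ^ (-κ - ρ + 1)) / (ρ - 1) := by
        rw [mul_assoc (E₀ * ε)]; gcongr
    _ = E₀ * (1 + c₀ ^ (ρ - 1) / (ρ - 1)) * ε * s ^ (-κ - ρ + 1) := by
        field_simp

/-- global existence and uniform bound with explicit constant
`C₀ = E₀(1 + c₀^(ρ-1)/(ρ-1))` for z' = -(K/(2t))|z|²z + J. -/
theorem perturbed_cubic_ode_global_bound
    (K z₀ : ℂ) (E₀ ε σ ρ κ c₀ t₀ : ℝ)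
    (hK : 0 ≤ K.re) (hE₀ : 0 < E₀) (hε : 0 < ε) (hρ : 1 < ρ) (hκ : 0 ≤ κ)
    (hc₀ : 0 < c₀) (ht₀ : 1 ≤ t₀)
    (ht₀l : c₀⁻¹ * Real.sqrt (1 + σ^2) < t₀)
    (ht₀u : t₀ < c₀ * Real.sqrt (1 + σ^2))
    (J : ℝ → ℂ) (hJcont : ContinuousOn J (Set.Ici t₀))
    (hz₀ : ‖z₀‖ ≤ E₀ * ε * (Real.sqrt (1 + σ^2)) ^ (-κ - ρ + 1))
    (hJ : ∀ t : ℝ, t₀ ≤ t →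
      ‖J t‖ ≤ E₀ * ε * (Real.sqrt (1 + σ^2)) ^ (-κ) * t ^ (-ρ)) :
    ∃ z : ℝ → ℂ,
      z t₀ = z₀ ∧
      ContinuousOn z (Set.Ici t₀) ∧
      (∀ t : ℝ, t₀ < t →
        HasDerivAt z (-(K/(2*t)) * (‖z t‖^2 : ℝ) * z t + J t) t) ∧
      (∀ t : ℝ, t₀ ≤ t →
        ‖z t‖ ≤ (E₀ * (1 + c₀ ^ (ρ - 1) / (ρ - 1))) * ε *
          (Real.sqrt (1 + σ^2)) ^ (-κ - ρ + 1)) :=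
  perturbed_cubic_ode_global_bound_general K z₀ E₀ ε σ ρ κ c₀ t₀ hK hE₀ hε hρ hc₀ ht₀ ht₀l J hJcont
    hz₀ hJ
end

section
/- Let μ ∈ (0, 1/10), ε > 0, R > 0, C > 0, and let u : [2,∞) × ℝ² → ℂ satisfy u(t,x) = 0 for |x| ≥ t + R and the pointwise bound |∇_{t,x}u(t,x)| ≤ C t^{-1/2} min{(log t)^{-1/2}, ε⟨t-|x|⟩^{μ-1}} for all t ≥ 2, x ∈ ℝ². Then the energy E(t) = (1/2)∫_{ℝ²}(|∂_t u|² + |∇_x u|²)dx satisfies E(t) ≤ C' ε^{1/(1-μ)} (log t)^{-(1-2μ)/(2-2μ)} for all t ≥ 2, with a constant C' depending only on C, R, μ, provided ε is small enough that ε^{1/(1-μ)}(log t)^{1/(2-2μ)} < t for all t ≥ 2. -/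
open MeasureTheory

/-- partial derivative in `t` -/
noncomputable def pt (ψ : ℝ → ℝ → ℝ → ℂ) : ℝ → ℝ → ℝ → ℂ :=
  fun t x₁ x₂ => deriv (fun s => ψ s x₁ x₂) t

/-- partial derivative in `x₁` -/
noncomputable def p1 (ψ : ℝ → ℝ → ℝ → ℂ) : ℝ → ℝ → ℝ → ℂ :=
  fun t x₁ x₂ => deriv (fun s => ψ t s x₂) x₁

/-- partial derivative in `x₂` -/
noncomputable def p2 (ψ : ℝ → ℝ → ℝ → ℂ) : ℝ → ℝ → ℝ → ℂ :=
  fun t x₁ x₂ => deriv (fun s => ψ t x₁ s) x₂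

/-- squared length of the space-time gradient -/
noncomputable def gradSq (u : ℝ → ℝ → ℝ → ℂ) (t x₁ x₂ : ℝ) : ℝ :=
  ‖pt u t x₁ x₂‖^2 + ‖p1 u t x₁ x₂‖^2 + ‖p2 u t x₁ x₂‖^2

/-!
Square the pointwise bound and integrate in polar coordinates; the area element `r dr` costs a
factor `r ≤ t + R`, which the `t⁻¹` in the bound absorbs. Since `⟨t - r⟩ ≳ t + R - r`, the bound
`ε ⟨t - r⟩^{μ-1}` is square integrable in `r` up to distance `m` from the cone `r = t + R`, with
integral `≲ ε² m^{2μ-1}`; on the remaining layer of width `m` the bound `(log t)^{-1/2}` contributes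
`≲ m / log t`. The width `m = ε^{1/(1-μ)} (log t)^{1/(2-2μ)}` balances the two contributions, and
`m / log t` is the claimed rate.
-/

open Set Real

theorem integral_comp_sqrt_sq_add_sq (f : ℝ → ℝ) :
    ∫ p : ℝ × ℝ, f √(p.1 ^ 2 + p.2 ^ 2) = 2 * π * ∫ r in Ioi 0, r * f r := by
  rw [← integral_comp_polarCoord_symm]
  have hradius : EqOn (fun p : ℝ × ℝ =>
      p.1 • f √((polarCoord.symm p).1 ^ 2 + (polarCoord.symm p).2 ^ 2))
      (fun p => p.1 * f p.1 * 1) polarCoord.target := by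
    rintro ⟨r, θ⟩ ⟨hr, -⟩
    have : (r * cos θ) ^ 2 + (r * sin θ) ^ 2 = r ^ 2 := by
      linear_combination r ^ 2 * sin_sq_add_cos_sq θ
    simp [polarCoord_symm_apply, this, sqrt_sq (le_of_lt hr)]
  rw [setIntegral_congr_fun polarCoord.open_target.measurableSet hradius, polarCoord_target,
    Measure.volume_eq_prod, ← Measure.prod_restrict,
    integral_prod_mul (fun r => r * f r) (fun _ => (1:ℝ))]
  simp only [integral_const, smul_eq_mul, mul_one, measureReal_restrict_apply_univ,
    Real.volume_real_Ioo]
  rw [max_eq_left (by linarith [pi_pos])]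
  ring

theorem integrable_comp_sqrt_sq_add_sq {g : ℝ → ℝ} {a M : ℝ} (hg : Measurable g)
    (hgM : ∀ r, |g r| ≤ M) (hga : ∀ r, a ≤ r → g r = 0) :
    Integrable fun p : ℝ × ℝ => g √(p.1 ^ 2 + p.2 ^ 2) := by
  refine IntegrableOn.integrable_of_forall_notMem_eq_zero (s := Metric.closedBall 0 a) ?_ ?_
  · refine Measure.integrableOn_of_bounded measure_closedBall_lt_top.ne ?_ (M := M) ?_
    · exact (hg.comp (by fun_prop)).aestronglyMeasurable
    · exact ae_of_all _ fun p => hgM _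
  · intro p hp
    apply hga
    rw [Metric.mem_closedBall, dist_zero_right, Prod.norm_def, not_le, lt_max_iff] at hp
    rcases hp with hp | hp
    · exact hp.le.trans (abs_le_sqrt (by nlinarith))
    · exact hp.le.trans (abs_le_sqrt (by nlinarith))

theorem integral_le_two_pi_mul_setIntegral_Ioi {F : ℝ × ℝ → ℝ} {g : ℝ → ℝ} {a M : ℝ}
    (hF : ∀ p, 0 ≤ F p) (hFg : ∀ p, F p ≤ g √(p.1 ^ 2 + p.2 ^ 2)) (hg : Measurable g)
    (hgM : ∀ r, |g r| ≤ M) (hga : ∀ r, a ≤ r → g r = 0) :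
    ∫ p, F p ≤ 2 * π * ∫ r in Ioi 0, r * g r := by
  rw [← integral_comp_sqrt_sq_add_sq]
  exact integral_mono_of_nonneg (.of_forall hF) (integrable_comp_sqrt_sq_add_sq hg hgM hga)
    (.of_forall hFg)

theorem intervalIntegral_sub_rpow_le {a m β : ℝ} (hm : 0 < m) (hma : m ≤ a) (hβ : β < -1) :
    ∫ r in (0:ℝ)..(a - m), (a - r) ^ β ≤ m ^ (β + 1) / -(β + 1) := by
  have ha : 0 < a := hm.trans_le hma
  rw [intervalIntegral.integral_comp_sub_left (fun s => s ^ β), sub_sub_cancel, sub_zero,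
    integral_rpow (Or.inr ⟨hβ.ne, notMem_uIcc_of_lt hm ha⟩), div_neg, ← neg_div]
  exact div_le_div_of_nonpos_of_le (by linarith) (by linarith [rpow_pos_of_pos ha (β + 1)])

theorem setIntegral_Ioi_mul_le_of_layer_bounds {g : ℝ → ℝ} {a m M D β : ℝ} (hg : Measurable g)
    (hg0 : ∀ r, 0 ≤ g r) (hga : ∀ r, a ≤ r → g r = 0) (hgM : ∀ r, g r ≤ M)
    (hgD : ∀ r, r ≤ a - m → g r ≤ D * (a - r) ^ β) (hm : 0 < m) (hma : m < a) (hβ : β < -1) :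
    ∫ r in Ioi 0, r * g r ≤ a * (D * (m ^ (β + 1) / -(β + 1)) + M * m) := by
  have ha : 0 < a := hm.trans hma
  have hD : 0 ≤ D := nonneg_of_mul_nonneg_left ((hg0 0).trans (hgD 0 (by linarith)))
    (by simpa using rpow_pos_of_pos ha β)
  have hint : IntegrableOn (fun r => r * g r) (Ioo 0 a) := by
    refine Measure.integrableOn_of_bounded (by simp) (measurable_id.mul hg).aestronglyMeasurable
      (M := a * M) ((ae_restrict_iff' measurableSet_Ioo).2 (ae_of_all _ fun r hr => ?_))
    rw [norm_mul, norm_of_nonneg hr.1.le, norm_of_nonneg (hg0 r)]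
    exact mul_le_mul hr.2.le (hgM r) (hg0 r) ha.le
  have hsupp : ∫ r in Ioi 0, r * g r = ∫ r in Ioo 0 a, r * g r :=
    setIntegral_eq_of_subset_of_forall_sdiff_eq_zero measurableSet_Ioi Ioo_subset_Ioi_self
      fun r hr => by simp [hga r (not_lt.1 fun h => hr.2 ⟨hr.1, h⟩)]
  have hinner : IntegrableOn (fun r => a * (D * (a - r) ^ β)) (Ioo 0 (a - m)) := by
    refine (ContinuousOn.integrableOn_Icc ?_).mono_set Ioo_subset_Icc_self
    exact continuousOn_const.mul (continuousOn_const.mul (ContinuousOn.rpow_const (by fun_prop)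
      fun r hr => Or.inl (by linarith [hr.2] : 0 < a - r).ne'))
  calc ∫ r in Ioi 0, r * g r
      = (∫ r in Ioo 0 (a - m), r * g r) + ∫ r in Ico (a - m) a, r * g r := by
        rw [hsupp, ← Ioo_union_Ico_eq_Ioo (b := a - m) (by linarith) (by linarith)]
        exact setIntegral_union (Ico_disjoint_Ico_same.mono_left Ioo_subset_Ico_self)
          measurableSet_Ico (hint.mono_set (Ioo_subset_Ioo_right (by linarith)))
          (hint.mono_set (Ico_subset_Ioo_left (by linarith)))
    _ ≤ (∫ r in Ioo 0 (a - m), a * (D * (a - r) ^ β)) + ∫ _ in Ico (a - m) a, a * M := by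
        refine add_le_add ?_ ?_
        · exact setIntegral_mono_on (hint.mono_set (Ioo_subset_Ioo_right (by linarith))) hinner
            measurableSet_Ioo fun r hr =>
              mul_le_mul (by linarith [hr.2]) (hgD r hr.2.le) (hg0 r) ha.le
        · exact setIntegral_mono_on (hint.mono_set (Ico_subset_Ioo_left (by linarith)))
            (integrableOn_const (by simp)) measurableSet_Ico fun r hr =>
              mul_le_mul hr.2.le (hgM r) (hg0 r) ha.le
    _ = a * D * (∫ r in (0)..(a - m), (a - r) ^ β) + a * M * m := by
        rw [setIntegral_const, Real.volume_real_Ico_of_le (by linarith), smul_eq_mul,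
          integral_const_mul, integral_const_mul, intervalIntegral.integral_of_le (by linarith),
          integral_Ioc_eq_integral_Ioo]
        ring
    _ ≤ a * D * (m ^ (β + 1) / -(β + 1)) + a * M * m := by
        gcongr
        exact intervalIntegral_sub_rpow_le hm hma.le hβ
    _ = a * (D * (m ^ (β + 1) / -(β + 1)) + M * m) := by ring

theorem one_add_sq_rpow_le {R s ν : ℝ} (hν : ν ≤ 0) (hRs : 0 < R + s) :
    (1 + s ^ 2) ^ ν ≤ (2 * (1 + R ^ 2)) ^ (-ν) * (R + s) ^ (2 * ν) := by
  have hc : 0 < 2 * (1 + R ^ 2) := by positivity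
  have hsq : (R + s) ^ 2 / (2 * (1 + R ^ 2)) ≤ 1 + s ^ 2 := by
    rw [div_le_iff₀ hc]
    nlinarith [sq_nonneg (R - s), sq_nonneg (R * s)]
  calc (1 + s ^ 2) ^ ν ≤ ((R + s) ^ 2 / (2 * (1 + R ^ 2))) ^ ν :=
        rpow_le_rpow_of_nonpos (by positivity) hsq hν
    _ = (2 * (1 + R ^ 2)) ^ (-ν) * (R + s) ^ (2 * ν) := by
        rw [div_rpow (by positivity) hc.le, rpow_neg hc.le, rpow_mul hRs.le,
          rpow_two, div_eq_inv_mul]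

theorem sq_rpow_neg_half {x : ℝ} (hx : 0 ≤ x) : (x ^ (-(1:ℝ) / 2)) ^ 2 = x⁻¹ := by
  rw [← rpow_mul_natCast hx]
  norm_num [rpow_neg_one]

theorem sq_sqrt_rpow {x : ℝ} (hx : 0 ≤ x) (ν : ℝ) : (√x ^ ν) ^ 2 = x ^ ν := by
  rw [← rpow_mul_natCast (sqrt_nonneg x), sqrt_eq_rpow, ← rpow_mul hx]
  congr 1
  ring

theorem le_min_of_sqrt_le {G C t L ε s ν : ℝ} (hG : 0 ≤ G) (hC : 0 ≤ C) (ht : 0 ≤ t)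
    (hL : 0 ≤ L)
    (h : √G ≤ C * t ^ (-(1:ℝ) / 2) * min (L ^ (-(1:ℝ) / 2)) (ε * √(1 + s ^ 2) ^ ν)) :
    G ≤ min (C ^ 2 / (t * L)) (C ^ 2 * ε ^ 2 / t * (1 + s ^ 2) ^ ν) := by
  have hsq {X : ℝ} (hX : √G ≤ X) : G ≤ X ^ 2 := by
    simpa [sq_sqrt hG] using pow_le_pow_left₀ (sqrt_nonneg G) hX 2
  have hCt : 0 ≤ C * t ^ (-(1:ℝ) / 2) := by positivity
  refine le_min ?_ ?_
  · refine (hsq (h.trans (mul_le_mul_of_nonneg_left (min_le_left _ _) hCt))).trans_eq ?_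
    rw [mul_pow, mul_pow, sq_rpow_neg_half ht, sq_rpow_neg_half hL]
    ring
  · refine (hsq (h.trans (mul_le_mul_of_nonneg_left (min_le_right _ _) hCt))).trans_eq ?_
    rw [mul_pow, mul_pow, mul_pow, sq_rpow_neg_half ht, sq_sqrt_rpow (by positivity)]
    ring

theorem gradSq_nonneg (u : ℝ → ℝ → ℝ → ℂ) (t x₁ x₂ : ℝ) : 0 ≤ gradSq u t x₁ x₂ := by
  unfold gradSq
  positivity

/-- The paper's `m_ε(t)`, as a function of `L = log t`. -/
noncomputable def layerWidth (μ ε L : ℝ) : ℝ := ε ^ ((1:ℝ) / (1 - μ)) * L ^ ((1:ℝ) / (2 - 2 * μ))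

section layerWidth
variable {μ ε L : ℝ}

theorem layerWidth_div_eq (hL : 0 < L) (hμ : μ ≠ 1) :
    layerWidth μ ε L / L = ε ^ ((1:ℝ) / (1 - μ)) * L ^ (-((1 - 2 * μ) / (2 - 2 * μ))) := by
  have h : (2:ℝ) - 2 * μ ≠ 0 := fun h => hμ (by linarith)
  rw [layerWidth, mul_div_assoc, ← rpow_sub_one hL.ne']
  congr 2
  field_simp
  ring

theorem sq_mul_layerWidth_rpow (hε : 0 < ε) (hL : 0 < L) (hμ : μ ≠ 1) :
    ε ^ 2 * layerWidth μ ε L ^ (2 * μ - 1) = layerWidth μ ε L / L := by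
  have h : (1:ℝ) - μ ≠ 0 := sub_ne_zero.2 hμ.symm
  have h' : (2:ℝ) - 2 * μ ≠ 0 := fun h' => hμ (by linarith)
  rw [layerWidth_div_eq hL hμ, layerWidth, mul_rpow (by positivity) (by positivity),
    ← rpow_mul hε.le, ← rpow_mul hL.le, ← mul_assoc, ← rpow_two, ← rpow_add hε]
  congr 2 <;> field_simp <;> ring

end layerWidth

/-- The square of the right-hand side of the pointwise bound at `|x| = r`, cut off at the cone
`r = t + R`. -/
noncomputable def gradSqMajorant (μ ε R C t r : ℝ) : ℝ :=
  if r < t + R then min (C ^ 2 / (t * log t)) (C ^ 2 * ε ^ 2 / t * (1 + (t - r) ^ 2) ^ (μ - 1))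
  else 0

section gradSqMajorant
variable {μ ε R C t : ℝ}

theorem gradSqMajorant_nonneg (ht : 1 ≤ t) (r : ℝ) : 0 ≤ gradSqMajorant μ ε R C t r := by
  have := log_nonneg ht
  unfold gradSqMajorant
  split_ifs <;> positivity

theorem gradSqMajorant_of_le {r : ℝ} (hr : t + R ≤ r) : gradSqMajorant μ ε R C t r = 0 :=
  if_neg hr.not_gt

theorem gradSqMajorant_le (ht : 1 ≤ t) (r : ℝ) :
    gradSqMajorant μ ε R C t r ≤ C ^ 2 / (t * log t) := by
  have := log_nonneg ht
  unfold gradSqMajorant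
  split_ifs
  · exact min_le_left _ _
  · positivity

theorem gradSqMajorant_le_rpow (ht : 0 ≤ t) (hμ : μ ≤ 1) {r : ℝ} (hr : r < t + R) :
    gradSqMajorant μ ε R C t r
      ≤ C ^ 2 * ε ^ 2 / t * (2 * (1 + R ^ 2)) ^ (1 - μ) * (t + R - r) ^ (2 * μ - 2) := by
  have hbracket := one_add_sq_rpow_le (R := R) (s := t - r) (ν := μ - 1) (by linarith)
    (by linarith)
  rw [show R + (t - r) = t + R - r by ring, show 2 * (μ - 1) = 2 * μ - 2 by ring, neg_sub]
    at hbracket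
  rw [gradSqMajorant, if_pos hr, mul_assoc]
  exact (min_le_right _ _).trans (by gcongr)

theorem measurable_gradSqMajorant : Measurable (gradSqMajorant μ ε R C t) :=
  Measurable.ite measurableSet_Iio (by fun_prop) measurable_const

theorem gradSq_le_gradSqMajorant {u : ℝ → ℝ → ℝ → ℂ} {x₁ x₂ : ℝ} (hC : 0 ≤ C) (ht : 1 ≤ t)
    (hsupp : t + R ≤ √(x₁ ^ 2 + x₂ ^ 2) → gradSq u t x₁ x₂ = 0)
    (hbound : √(gradSq u t x₁ x₂) ≤ C * t ^ (-(1:ℝ) / 2) *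
      min (log t ^ (-(1:ℝ) / 2)) (ε * √(1 + (t - √(x₁ ^ 2 + x₂ ^ 2)) ^ 2) ^ (μ - 1))) :
    gradSq u t x₁ x₂ ≤ gradSqMajorant μ ε R C t √(x₁ ^ 2 + x₂ ^ 2) := by
  unfold gradSqMajorant
  split_ifs with hr
  · exact le_min_of_sqrt_le (gradSq_nonneg u t x₁ x₂) hC (by linarith) (log_nonneg ht) hbound
  · exact (hsupp (not_lt.1 hr)).le

theorem setIntegral_Ioi_mul_gradSqMajorant_le (hμ : μ < 1 / 2) (hε : 0 < ε) (ht : 1 < t)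
    (hm : layerWidth μ ε (log t) < t + R) :
    ∫ r in Ioi 0, r * gradSqMajorant μ ε R C t r
      ≤ (t + R) / t * (C ^ 2 * ((2 * (1 + R ^ 2)) ^ (1 - μ) / (1 - 2 * μ) + 1))
        * (layerWidth μ ε (log t) / log t) := by
  set m := layerWidth μ ε (log t)
  set K := (2 * (1 + R ^ 2)) ^ (1 - μ)
  have hL : 0 < log t := log_pos ht
  have hm0 : 0 < m := by unfold m layerWidth; positivity
  have hbal : ε ^ 2 * m ^ (2 * μ - 1) = m / log t := sq_mul_layerWidth_rpow hε hL (by linarith)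
  have hradial := setIntegral_Ioi_mul_le_of_layer_bounds (g := gradSqMajorant μ ε R C t)
    (β := 2 * μ - 2) measurable_gradSqMajorant (gradSqMajorant_nonneg ht.le) (fun r => gradSqMajorant_of_le)
    (gradSqMajorant_le ht.le)
    (fun r hr => gradSqMajorant_le_rpow (by linarith) (by linarith) (by linarith)) hm0 hm
    (by linarith)
  rw [show 2 * μ - 2 + 1 = 2 * μ - 1 by ring, neg_sub] at hradial
  calc _ ≤ _ := hradial
    _ = (t + R) / t * C ^ 2 * (K / (1 - 2 * μ) * (ε ^ 2 * m ^ (2 * μ - 1)) + m / log t) := by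
        field_simp
        ring
    _ = _ := by rw [hbal]; ring

end gradSqMajorant

theorem energy_decay_dissipative_general
    (μ ε R C : ℝ) (hμ1 : μ < 1/10)
    (hε : 0 < ε) (hR : 0 < R) (hC : 0 < C)
    (u : ℝ → ℝ → ℝ → ℂ)
    (hsupp : ∀ t : ℝ, 2 ≤ t → ∀ x₁ x₂ : ℝ,
      t + R ≤ Real.sqrt (x₁^2 + x₂^2) → u t x₁ x₂ = 0 ∧ gradSq u t x₁ x₂ = 0)
    (hbound : ∀ t : ℝ, 2 ≤ t → ∀ x₁ x₂ : ℝ,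
      Real.sqrt (gradSq u t x₁ x₂)
        ≤ C * t ^ (-(1:ℝ)/2) *
          min ((Real.log t) ^ (-(1:ℝ)/2))
              (ε * (Real.sqrt (1 + (t - Real.sqrt (x₁^2 + x₂^2))^2)) ^ (μ - 1)))
    (hsmall : ∀ t : ℝ, 2 ≤ t →
      ε ^ ((1:ℝ)/(1 - μ)) * (Real.log t) ^ ((1:ℝ)/(2 - 2*μ)) < t) :
    ∃ C' : ℝ, 0 < C' ∧ ∀ t : ℝ, 2 ≤ t →
      (1/2) * (∫ p : ℝ × ℝ, gradSq u t p.1 p.2)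
        ≤ C' * ε ^ ((1:ℝ)/(1 - μ)) *
            (Real.log t) ^ (-((1 - 2*μ)/(2 - 2*μ))) := by
  set A := C ^ 2 * ((2 * (1 + R ^ 2)) ^ (1 - μ) / (1 - 2 * μ) + 1)
  have hA : 0 < A := by
    have : 0 < 1 - 2 * μ := by linarith
    positivity
  refine ⟨π * (1 + R / 2) * A, by positivity, fun t ht => ?_⟩
  have hL : 0 < log t := log_pos (by linarith)
  have hrate : 0 < layerWidth μ ε (log t) / log t := by unfold layerWidth; positivity
  have henergy : ∫ p : ℝ × ℝ, gradSq u t p.1 p.2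
      ≤ 2 * π * ∫ r in Ioi 0, r * gradSqMajorant μ ε R C t r :=
    integral_le_two_pi_mul_setIntegral_Ioi (fun p => gradSq_nonneg u t p.1 p.2)
      (fun p => gradSq_le_gradSqMajorant hC.le (by linarith) (hsupp t ht p.1 p.2 · |>.2)
        (hbound t ht p.1 p.2)) measurable_gradSqMajorant
      (fun r => (abs_of_nonneg (gradSqMajorant_nonneg (by linarith) r)).trans_le
        (gradSqMajorant_le (by linarith) r)) (fun r => gradSqMajorant_of_le)
  have hradial := setIntegral_Ioi_mul_gradSqMajorant_le (C := C) (by linarith) hε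
    (by linarith) ((hsmall t ht).trans (by linarith : t < t + R))
  have harea : (t + R) / t ≤ 1 + R / 2 := by
    rw [add_div, div_self (by linarith)]
    gcongr
  calc (1/2) * (∫ p : ℝ × ℝ, gradSq u t p.1 p.2)
      ≤ π * ∫ r in Ioi 0, r * gradSqMajorant μ ε R C t r := by linarith
    _ ≤ π * ((t + R) / t * A * (layerWidth μ ε (log t) / log t)) :=
        mul_le_mul_of_nonneg_left hradial pi_pos.le
    _ ≤ π * ((1 + R / 2) * A * (layerWidth μ ε (log t) / log t)) := by gcongr
    _ = _ := by rw [layerWidth_div_eq hL (by linarith)]; ring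

/-- energy decay under the pointwise bound
|∇u| ≤ C t^{-1/2} min{(log t)^{-1/2}, ε⟨t-|x|⟩^{μ-1}} and finite propagation. -/
theorem energy_decay_dissipative
    (μ ε R C : ℝ) (hμ0 : 0 < μ) (hμ1 : μ < 1/10)
    (hε : 0 < ε) (hR : 0 < R) (hC : 0 < C)
    (u : ℝ → ℝ → ℝ → ℂ)
    (hmeas : ∀ t : ℝ, Measurable (fun p : ℝ × ℝ => gradSq u t p.1 p.2))
    (hsupp : ∀ t : ℝ, 2 ≤ t → ∀ x₁ x₂ : ℝ,
      t + R ≤ Real.sqrt (x₁^2 + x₂^2) → u t x₁ x₂ = 0 ∧ gradSq u t x₁ x₂ = 0)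
    (hbound : ∀ t : ℝ, 2 ≤ t → ∀ x₁ x₂ : ℝ,
      Real.sqrt (gradSq u t x₁ x₂)
        ≤ C * t ^ (-(1:ℝ)/2) *
          min ((Real.log t) ^ (-(1:ℝ)/2))
              (ε * (Real.sqrt (1 + (t - Real.sqrt (x₁^2 + x₂^2))^2)) ^ (μ - 1)))
    (hsmall : ∀ t : ℝ, 2 ≤ t →
      ε ^ ((1:ℝ)/(1 - μ)) * (Real.log t) ^ ((1:ℝ)/(2 - 2*μ)) < t) :
    ∃ C' : ℝ, 0 < C' ∧ ∀ t : ℝ, 2 ≤ t →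
      (1/2) * (∫ p : ℝ × ℝ, gradSq u t p.1 p.2)
        ≤ C' * ε ^ ((1:ℝ)/(1 - μ)) *
            (Real.log t) ^ (-((1 - 2*μ)/(2 - 2*μ))) :=
  energy_decay_dissipative_general μ ε R C hμ1 hε hR hC u hsupp hbound hsmall
end

section
/- Let K ∈ ℂ with |K| ≤ K₀, Re K ≥ 0. Suppose ξ, η : [t₀,∞) → ℂ × ℝ solve ξ'(t) = -i(Im K/(2tη(t)))|ξ(t)|²ξ(t) + J(t)sqrt(η(t)) and η'(t) = (Re K/t)|ξ(t)|², with η(t₀) = 1, where η(t) ≥ 1 for all t. Then z(t) := ξ(t)/sqrt(η(t)) solves z'(t) = -(K/(2t))|z(t)|²z(t) + J(t) on (t₀,∞). -/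
/-!
Differentiating `z = ξ / √η` gives `z' = (ξ' - ξ η' / (2η)) / √η`. Substituting the system, the
phase equation contributes `-i (Im K / (2t)) |z|² z` and the amplitude equation
`-(Re K / (2t)) |z|² z`, which add up to `-(K / (2t)) |z|² z`, while the forcing `J √η` becomes `J`.
Writing `κ = K / t` turns this into a pointwise identity with a constant complex coefficient.
-/

open Complex

theorem HasDerivAt.div_sqrt {ξ : ℝ → ℂ} {η : ℝ → ℝ} {ξ' : ℂ} {η' t : ℝ}
    (hξ : HasDerivAt ξ ξ' t) (hη : HasDerivAt η η' t) (hpos : 0 < η t) :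
    HasDerivAt (fun s => ξ s / (√(η s) : ℂ))
      ((ξ' - ξ t * (η' / (2 * η t) : ℝ)) / √(η t)) t := by
  have hsqrt : HasDerivAt (fun s => (√(η s) : ℂ)) ((1 / (2 * √(η t)) * η' : ℝ) : ℂ) t :=
    ((Real.hasDerivAt_sqrt hpos.ne').comp t hη).ofReal_comp
  have hne : (√(η t) : ℂ) ≠ 0 := ofReal_ne_zero.mpr (Real.sqrt_pos.mpr hpos).ne'
  refine (hξ.div hsqrt hne).congr_deriv ?_
  have hsq : (√(η t) : ℂ) ^ 2 = η t := by exact_mod_cast Real.sq_sqrt hpos.le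
  have hη0 : (η t : ℂ) ≠ 0 := ofReal_ne_zero.mpr hpos.ne'
  push_cast
  rw [hsq]
  field_simp
  rw [← hsq]
  ring

theorem hasDerivAt_div_sqrt_of_amplitude_phase {ξ : ℝ → ℂ} {η : ℝ → ℝ} {κ J : ℂ} {t : ℝ}
    (hpos : 0 < η t)
    (hξ : HasDerivAt ξ (-I * (κ.im / (2 * η t) : ℝ) * (‖ξ t‖ ^ 2 : ℝ) * ξ t + J * √(η t)) t)
    (hη : HasDerivAt η (κ.re * ‖ξ t‖ ^ 2) t) :
    HasDerivAt (fun s => ξ s / (√(η s) : ℂ))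
      (-(κ / 2) * (‖ξ t / (√(η t) : ℂ)‖ ^ 2 : ℝ) * (ξ t / √(η t)) + J) t := by
  refine (hξ.div_sqrt hη hpos).congr_deriv ?_
  have hsq : (√(η t) : ℂ) ^ 2 = η t := by exact_mod_cast Real.sq_sqrt hpos.le
  have hne : (√(η t) : ℂ) ≠ 0 := ofReal_ne_zero.mpr (Real.sqrt_pos.mpr hpos).ne'
  have hη0 : (η t : ℂ) ≠ 0 := ofReal_ne_zero.mpr hpos.ne'
  have hnorm : ‖ξ t / (√(η t) : ℂ)‖ ^ 2 = ‖ξ t‖ ^ 2 / η t := by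
    rw [norm_div, div_pow, norm_real, Real.norm_of_nonneg (Real.sqrt_nonneg _),
      Real.sq_sqrt hpos.le]
  rw [hnorm]
  push_cast
  field_simp
  linear_combination (-(‖ξ t‖ : ℂ) ^ 2 * ξ t) * re_add_im κ

theorem amplitude_phase_decomposition_general
    (K : ℂ) (t₀ : ℝ)
    (ξ : ℝ → ℂ) (η : ℝ → ℝ) (J : ℝ → ℂ)
    (hη1 : ∀ t : ℝ, 1 ≤ η t)
    (hξ : ∀ t : ℝ, t₀ < t →
      HasDerivAt ξ
        (-(Complex.I) * ((K.im / (2 * t * η t)) : ℝ) * (‖ξ t‖^2 : ℝ) * ξ t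
          + J t * (Real.sqrt (η t) : ℂ)) t)
    (hηd : ∀ t : ℝ, t₀ < t →
      HasDerivAt η (K.re / t * ‖ξ t‖^2) t) :
    ∀ t : ℝ, t₀ < t →
      HasDerivAt (fun s => ξ s / (Real.sqrt (η s) : ℂ))
        (-(K/(2*t)) * (‖ξ t / (Real.sqrt (η t) : ℂ)‖^2 : ℝ) *
            (ξ t / (Real.sqrt (η t) : ℂ)) + J t) t := by
  intro t ht
  have hre : (K / t).re = K.re / t := div_ofReal_re K t
  have him : (K / t).im / (2 * η t) = K.im / (2 * t * η t) := by
    rw [div_ofReal_im]; ring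
  have key := hasDerivAt_div_sqrt_of_amplitude_phase (κ := K / t) (J := J t)
    (one_pos.trans_le (hη1 t)) (him ▸ hξ t ht) (hre ▸ hηd t ht)
  rwa [div_div, mul_comm (t : ℂ)] at key

/-- the amplitude–phase decomposition z = ξ/√η transforms the
integrable system for (ξ,η) back into z' = -(K/(2t))|z|²z + J. -/
theorem amplitude_phase_decomposition
    (K : ℂ) (K₀ t₀ : ℝ) (hK₀ : ‖K‖ ≤ K₀) (hKre : 0 ≤ K.re) (ht₀ : 1 ≤ t₀)
    (ξ : ℝ → ℂ) (η : ℝ → ℝ) (J : ℝ → ℂ)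
    (hJ : Continuous J)
    (hη1 : ∀ t : ℝ, 1 ≤ η t) (hηinit : η t₀ = 1)
    (hξ : ∀ t : ℝ, t₀ < t →
      HasDerivAt ξ
        (-(Complex.I) * ((K.im / (2 * t * η t)) : ℝ) * (‖ξ t‖^2 : ℝ) * ξ t
          + J t * (Real.sqrt (η t) : ℂ)) t)
    (hηd : ∀ t : ℝ, t₀ < t →
      HasDerivAt η (K.re / t * ‖ξ t‖^2) t) :
    ∀ t : ℝ, t₀ < t →
      HasDerivAt (fun s => ξ s / (Real.sqrt (η s) : ℂ))
        (-(K/(2*t)) * (‖ξ t / (Real.sqrt (η t) : ℂ)‖^2 : ℝ) *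
            (ξ t / (Real.sqrt (η t) : ℂ)) + J t) t :=
  amplitude_phase_decomposition_general K t₀ ξ η J hη1 hξ hηd
end
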